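/- Let G be an AT-free graph, let x, y be nonadjacent vertices, and let z ∈ I(x,y). Then every vertex w ∈ I(x,y) \ N[z] lies in I(x,z), or in I(z,y), or in a component of G − N[z] containing neither x nor y. -/

import Mathlib

open SimpleGraph

/-- The closed neighborhood of a vertex. -/
def closedNbh {V : Type*} (G : SimpleGraph V) (v : V) : Set V :=
  insert v (G.neighborSet v)

/-- `u` and `w` are joined by a walk all of whose vertices avoid the set `A`. -/
def reachAvoid {V : Type*} (G : SimpleGraph V) (A : Set V) (u w : V) : Prop :=
  ∃ p : G.Walk u w, ∀ x ∈ p.support, x ∉ A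

/-- `{p, q, r}` is an asteroidal triple: three pairwise nonadjacent (distinct) vertices
such that every two of them are joined by a path avoiding the closed neighborhood
of the third. -/
def IsAT {V : Type*} (G : SimpleGraph V) (p q r : V) : Prop :=
  p ≠ q ∧ p ≠ r ∧ q ≠ r ∧ ¬ G.Adj p q ∧ ¬ G.Adj p r ∧ ¬ G.Adj q r ∧
  reachAvoid G (closedNbh G r) p q ∧ reachAvoid G (closedNbh G q) p r ∧
  reachAvoid G (closedNbh G p) q r

/-- `C` is a block at `v`: a connected component of `G − N[v]`. -/
def IsBlockAt {V : Type*} (G : SimpleGraph V) (v : V) (C : Set V) : Prop :=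
  C.Nonempty ∧ C ⊆ (closedNbh G v)ᶜ ∧ (G.induce C).Connected ∧
  ∀ u ∉ C, u ∉ closedNbh G v → ∀ c ∈ C, ¬ G.Adj u c

/-- `z` is between the nonadjacent vertices `x` and `y`: `z` and `x` lie in a common
component of `G − N[y]`, and `z` and `y` lie in a common component of `G − N[x]`. -/
def Between {V : Type*} (G : SimpleGraph V) (x y z : V) : Prop :=
  reachAvoid G (closedNbh G y) x z ∧ reachAvoid G (closedNbh G x) y z

/-- The interval between `x` and `y`: all vertices between `x` and `y`. -/
def interval {V : Type*} (G : SimpleGraph V) (x y : V) : Set V :=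
  {z | Between G x y z}

/-!
Let `D` be the component of `G − N[z]` containing `w`. If `D` contains both `x` and `y`, then
`x, y, z` is an asteroidal triple, since `z ∈ I(x,y)` supplies the other two avoiding paths. If it
contains exactly one of them, say `x`, then `w ∈ I(x,z)`: both `w` and `z` reach `y` in `G − N[x]`,
hence reach each other there. Otherwise `D` itself is the required component.
-/

namespace reachAvoid

variable {V : Type*} {G : SimpleGraph V} {A : Set V} {u v w : V}

lemma refl (hu : u ∉ A) : reachAvoid G A u u :=
  ⟨Walk.nil, by simpa using hu⟩

lemma of_adj (hu : u ∉ A) (hw : w ∉ A) (h : G.Adj u w) : reachAvoid G A u w :=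
  ⟨Walk.cons h Walk.nil, by simp [hu, hw]⟩

lemma symm (h : reachAvoid G A u w) : reachAvoid G A w u := by
  obtain ⟨p, hp⟩ := h
  exact ⟨p.reverse, by simpa using hp⟩

lemma trans (h₁ : reachAvoid G A u v) (h₂ : reachAvoid G A v w) : reachAvoid G A u w := by
  obtain ⟨p, hp⟩ := h₁
  obtain ⟨q, hq⟩ := h₂
  refine ⟨p.append q, fun a ha => ?_⟩
  rcases (Walk.mem_support_append_iff p q).1 ha with h | h
  · exact hp a h
  · exact hq a h

lemma end_notMem (h : reachAvoid G A u w) : w ∉ A := by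
  obtain ⟨p, hp⟩ := h
  exact hp w p.end_mem_support

end reachAvoid

section Component

variable {V : Type*} {G : SimpleGraph V} {A : Set V} {w : V}

lemma induce_setOf_reachAvoid_connected (hw : w ∉ A) :
    (G.induce {u | reachAvoid G A w u}).Connected := by
  classical
  refine induce_connected_of_patches w (reachAvoid.refl hw) fun {v} ⟨p, hp⟩ => ?_
  have hsupport : {u | u ∈ p.support} ⊆ {u | reachAvoid G A w u} := fun u hu =>
    ⟨p.takeUntil u hu, fun a ha => hp a (p.support_takeUntil_subset_support hu ha)⟩
  exact ⟨_, hsupport, p.start_mem_support, p.end_mem_support,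
    p.connected_induce_support.preconnected _ _⟩

lemma isBlockAt_setOf_reachAvoid {z : V} (hw : w ∉ closedNbh G z) :
    IsBlockAt G z {u | reachAvoid G (closedNbh G z) w u} := by
  refine ⟨⟨w, reachAvoid.refl hw⟩, fun u hu => hu.end_notMem,
    induce_setOf_reachAvoid_connected hw, fun u hu hNu c hc hadj => hu ?_⟩
  exact hc.trans (reachAvoid.of_adj hc.end_notMem hNu hadj.symm)

end Component

lemma isAT_of_mem_interval {V : Type*} {G : SimpleGraph V} {x y z : V}
    (hxy : ¬ G.Adj x y) (hne : x ≠ y) (hz : z ∈ interval G x y)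
    (hxy_z : reachAvoid G (closedNbh G z) x y) : IsAT G x y z := by
  obtain ⟨hxz, hyz⟩ := hz
  have hzx : z ∉ closedNbh G x := hyz.end_notMem
  have hzy : z ∉ closedNbh G y := hxz.end_notMem
  simp only [closedNbh, Set.mem_insert_iff, mem_neighborSet, not_or] at hzx hzy
  exact ⟨hne, fun h => hzx.1 h.symm, fun h => hzy.1 h.symm, hxy, hzx.2, hzy.2,
    hxy_z, hxz, hyz⟩

/-- in an AT-free graph, for nonadjacent `x, y` and `z ∈ I(x,y)`, every
vertex `w ∈ I(x,y) \ N[z]` lies in `I(x,z)`, in `I(z,y)`, or in a component of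
`G − N[z]` containing neither `x` nor `y`. -/
theorem stmt11 {V : Type*} (G : SimpleGraph V) (hAT : ∀ p q r : V, ¬ IsAT G p q r)
    (x y : V) (hxy : ¬ G.Adj x y) (hne : x ≠ y)
    (z : V) (hz : z ∈ interval G x y)
    (w : V) (hw : w ∈ interval G x y) (hwz : w ∉ closedNbh G z) :
    w ∈ interval G x z ∨ w ∈ interval G z y ∨
      ∃ D : Set V, IsBlockAt G z D ∧ w ∈ D ∧ x ∉ D ∧ y ∉ D := by
  obtain ⟨hxw, hyw⟩ := hw
  by_cases hx : reachAvoid G (closedNbh G z) x w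
  · by_cases hy : reachAvoid G (closedNbh G z) y w
    · exact (hAT x y z (isAT_of_mem_interval hxy hne hz (hx.trans hy.symm))).elim
    · exact Or.inl ⟨hx, hz.2.symm.trans hyw⟩
  · by_cases hy : reachAvoid G (closedNbh G z) y w
    · exact Or.inr (Or.inl ⟨hz.1.symm.trans hxw, hy⟩)
    · exact Or.inr (Or.inr ⟨_, isBlockAt_setOf_reachAvoid hwz, reachAvoid.refl hwz,
        fun h => hx h.symm, fun h => hy h.symm⟩)
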